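/- Let 0<p≤1 and φ ∈ 𝒢_p. Then for every κ ∈ 𝒮(ℝⁿ) there exists a constant C = C(κ, n, p, φ) such that |⟨f, κ⟩| ≤ C ‖f‖_{H𝓜_{p,φ}} for all f ∈ H𝓜_{p,φ}(ℝⁿ); that is, H𝓜_{p,φ}(ℝⁿ) is continuously embedded into the space of tempered distributions. -/

import Mathlib

open MeasureTheory ENNReal

noncomputable section

/-- Euclidean space `ℝⁿ`. -/
abbrev En (n : ℕ) := EuclideanSpace ℝ (Fin n)

/-- The axis-parallel closed cube with center `c` and side length `ℓ`. -/
def cube (n : ℕ) (c : En n) (ℓ : ℝ) : Set (En n) :=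
  {y | ∀ i, |y i - c i| ≤ ℓ / 2}

/-- The generalized Morrey quasinorm (with exponent `p`) of an `ℝ≥0∞`-valued function. -/
def morrey (n : ℕ) (p : ℝ) (φ : En n → ℝ → ℝ) (g : En n → ℝ≥0∞) : ℝ≥0∞ :=
  ⨆ (c : En n) (ℓ : ℝ) (_ : 0 < ℓ),
    (ENNReal.ofReal (φ c ℓ))⁻¹ *
      ((ENNReal.ofReal (ℓ ^ n))⁻¹ * ∫⁻ y in cube n c ℓ, g y ^ p) ^ (1 / p)

/-- The generalized Morrey quasinorm of a real-valued function. -/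
def morreyR (n : ℕ) (p : ℝ) (φ : En n → ℝ → ℝ) (f : En n → ℝ) : ℝ≥0∞ :=
  morrey n p φ (fun y => ENNReal.ofReal |f y|)

/-- The generalized Morrey quasinorm of a complex-valued function. -/
def morreyC (n : ℕ) (p : ℝ) (φ : En n → ℝ → ℝ) (f : En n → ℂ) : ℝ≥0∞ :=
  morrey n p φ (fun y => ENNReal.ofReal ‖f y‖)

/-- The generalized Morrey norm with exponent `q : ℝ≥0∞` (allowing `q = ∞`). -/
def morreyL (n : ℕ) (q : ℝ≥0∞) (φ : En n → ℝ → ℝ) (f : En n → ℝ) : ℝ≥0∞ :=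
  ⨆ (c : En n) (ℓ : ℝ) (_ : 0 < ℓ),
    (ENNReal.ofReal (φ c ℓ))⁻¹ * (ENNReal.ofReal (ℓ ^ n)) ^ (-(1 / q).toReal) *
      eLpNorm f q (volume.restrict (cube n c ℓ))

/-- The weak generalized Morrey quasinorm. -/
def wMorrey (n : ℕ) (p : ℝ) (φ : En n → ℝ → ℝ) (g : En n → ℝ≥0∞) : ℝ≥0∞ :=
  ⨆ (T : ℝ) (_ : 0 < T),
    ENNReal.ofReal T *
      morrey n p φ ({y | ENNReal.ofReal T < g y}.indicator fun _ => 1)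

/-- The class `𝒢_p`, with explicit almost-increasing constant `C`. -/
def GClassC (n : ℕ) (p : ℝ) (φ : En n → ℝ → ℝ) (C : ℝ) : Prop :=
  (∀ x r, 0 < r → 0 < φ x r) ∧
  (∀ x s r, 0 < s → s ≤ r → φ x r ≤ φ x s) ∧
  (1 ≤ C ∧ ∀ x s r, 0 < s → s ≤ r →
    φ x s * s ^ ((n : ℝ) / p) ≤ C * (φ x r * r ^ ((n : ℝ) / p)))

/-- The class `𝒢_p`. -/
def GClass (n : ℕ) (p : ℝ) (φ : En n → ℝ → ℝ) : Prop :=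
  ∃ C, GClassC n p φ C

/-- The `ℓ_q` norm of a sequence of extended nonnegative reals. -/
def lqNorm (q : ℝ≥0∞) (a : ℕ → ℝ≥0∞) : ℝ≥0∞ :=
  if q = ⊤ then ⨆ j, a j else (∑' j, a j ^ q.toReal) ^ (1 / q.toReal)

/-- The Hardy-Littlewood maximal function (over cubes). -/
def hlM (n : ℕ) (f : En n → ℝ) (x : En n) : ℝ≥0∞ :=
  ⨆ (c : En n) (ℓ : ℝ) (_ : 0 < ℓ) (_ : x ∈ cube n c ℓ),
    (ENNReal.ofReal (ℓ ^ n))⁻¹ * ∫⁻ y in cube n c ℓ, ENNReal.ofReal |f y|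

/-- `ℓ^∞` distance on `ℝⁿ`. -/
def linf (n : ℕ) (x y : En n) : ℝ := ⨆ i, |x i - y i|

/-- Tempered distributions on `ℝⁿ`. -/
abbrev TempDist (n : ℕ) := SchwartzMap (En n) ℝ →L[ℝ] ℝ

/-- The Schwartz seminorm quantity `p_N`. -/
def pN (n N : ℕ) (ψ : SchwartzMap (En n) ℝ) : ℝ≥0∞ :=
  ∑ m ∈ Finset.range (N + 1),
    ⨆ x : En n, ENNReal.ofReal ((1 + ‖x‖) ^ N * ‖iteratedFDeriv ℝ m (⇑ψ) x‖)

/-- The grand maximal function of a tempered distribution. -/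
def grandMax (n N : ℕ) (f : TempDist n) (x : En n) : ℝ≥0∞ :=
  ⨆ (ψ : SchwartzMap (En n) ℝ) (_ : pN n N ψ ≤ 1) (t : ℝ) (_ : 0 < t)
    (η : SchwartzMap (En n) ℝ) (_ : ∀ y, η y = (t ^ n)⁻¹ * ψ (t⁻¹ • (x - y))),
    ENNReal.ofReal |f η|

/-- The generalized Hardy-Morrey quasinorm, via the grand maximal function. -/
def hMorrey (n : ℕ) (p : ℝ) (φ : En n → ℝ → ℝ) (N : ℕ) (f : TempDist n) : ℝ≥0∞ :=
  morrey n p φ (grandMax n N f)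

/-- The heat maximal function `sup_{t>0} |e^{tΔ}f|` of a tempered distribution. -/
def heatMax (n : ℕ) (f : TempDist n) (x : En n) : ℝ≥0∞ :=
  ⨆ (t : ℝ) (_ : 0 < t) (η : SchwartzMap (En n) ℝ)
    (_ : ∀ y, η y = (4 * Real.pi * t) ^ (-(n : ℝ) / 2) *
      Real.exp (-‖x - y‖ ^ 2 / (4 * t))),
    ENNReal.ofReal |f η|

/-- The Peetre maximal function. -/
def peetreMax (n : ℕ) (r d : ℝ) (f : En n → ℂ) (x : En n) : ℝ≥0∞ :=
  ⨆ y : En n, ENNReal.ofReal (‖f (x - y)‖ / (1 + d * ‖y‖ ^ ((n : ℝ) / r)))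

/-- The (distributional) Fourier transform of `f` is supported in `Ω`. -/
def ftSupportedIn (n : ℕ) (f : En n → ℂ) (Ω : Set (En n)) : Prop :=
  ∀ ψ : SchwartzMap (En n) ℂ, Disjoint (tsupport ⇑ψ) Ω →
    ∫ x, f x * (SchwartzMap.fourierTransformCLM ℂ ψ) x = 0

/-!
Fix `κ`. For `x` in the unit cube `Q₀` centred at `0`, the Schwartz function `ψ = A⁻¹ κ (x - ·)`
satisfies `p_N(ψ) ≤ 1` for a constant `A` depending only on `κ`, `N` and `n`: Peetre's inequality
`1 + |z| ≤ (1 + |x|)(1 + |x - z|)` absorbs the translation, and `|x| ≤ √n / 2`. Testing `f` at scale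
`t = 1` with `ψ` recovers `A⁻¹ ⟨f, κ⟩`, so `𝓜f ≥ A⁻¹ |⟨f, κ⟩|` on `Q₀`, and the term of the Morrey
supremum at `Q₀` gives `|⟨f, κ⟩| ≤ A φ(0, 1) ‖f‖_{H𝓜_{p,φ}}`.
-/

lemma one_add_norm_le_mul_one_add_norm_sub {E : Type*} [SeminormedAddCommGroup E] (x z : E) :
    1 + ‖z‖ ≤ (1 + ‖x‖) * (1 + ‖x - z‖) := by
  have : ‖z‖ ≤ ‖x‖ + ‖x - z‖ := by simpa using norm_sub_le x (x - z)
  nlinarith [norm_nonneg x, norm_nonneg (x - z)]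

section Schwartz

variable {E F : Type*} [NormedAddCommGroup E] [NormedSpace ℝ E]
  [NormedAddCommGroup F] [NormedSpace ℝ F]

lemma norm_iteratedFDeriv_comp_const_sub (f : E → F) (x z : E) (m : ℕ) :
    ‖iteratedFDeriv ℝ m (fun w ↦ f (x - w)) z‖ = ‖iteratedFDeriv ℝ m f (x - z)‖ := by
  have hcomp : (fun w ↦ f (x - w)) = (fun w ↦ f (x + w)) ∘ LinearIsometryEquiv.neg ℝ := by
    funext w; simp [sub_eq_add_neg]
  rw [hcomp, LinearIsometryEquiv.norm_iteratedFDeriv_comp_right, iteratedFDeriv_comp_add_left]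
  simp [sub_eq_add_neg]

namespace SchwartzMap

def reflectTranslate (x : E) : 𝓢(E, F) →L[ℝ] 𝓢(E, F) :=
  compCLMOfAntilipschitz (g := fun z ↦ x - z) (K := 1) ℝ (by fun_prop)
    (fun _ _ ↦ by simp [edist_dist, dist_eq_norm, norm_sub_rev])

@[simp]
lemma reflectTranslate_apply (x : E) (ψ : 𝓢(E, F)) (z : E) :
    reflectTranslate x ψ z = ψ (x - z) := rfl

@[simp]
lemma reflectTranslate_reflectTranslate (x : E) (ψ : 𝓢(E, F)) :
    reflectTranslate x (reflectTranslate x ψ) = ψ := by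
  ext z; simp

lemma exists_pos_weighted_iteratedFDeriv_le (ψ : 𝓢(E, F)) (N : ℕ) :
    ∃ B > 0, ∀ m ≤ N, ∀ w, (1 + ‖w‖) ^ N * ‖iteratedFDeriv ℝ m ψ w‖ ≤ B :=
  ⟨2 ^ N * (Finset.Iic (N, N)).sup (fun m ↦ SchwartzMap.seminorm ℝ m.1 m.2) ψ + 1,
    by positivity, fun m hm w ↦ (one_add_le_sup_seminorm_apply (m := (N, N)) le_rfl hm ψ w).trans
      (le_add_of_nonneg_right zero_le_one)⟩

lemma weighted_iteratedFDeriv_reflectTranslate_le {ψ : 𝓢(E, F)} {N : ℕ} {B R : ℝ}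
    (hψ : ∀ m ≤ N, ∀ w, (1 + ‖w‖) ^ N * ‖iteratedFDeriv ℝ m ψ w‖ ≤ B) {x : E} (hx : ‖x‖ ≤ R)
    {m : ℕ} (hm : m ≤ N) (z : E) :
    (1 + ‖z‖) ^ N * ‖iteratedFDeriv ℝ m (reflectTranslate x ψ) z‖ ≤ (1 + R) ^ N * B := by
  have hpeetre : (1 + ‖z‖) ^ N ≤ (1 + R) ^ N * (1 + ‖x - z‖) ^ N := by
    rw [← mul_pow]
    gcongr
    exact (one_add_norm_le_mul_one_add_norm_sub x z).trans (by gcongr)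
  calc (1 + ‖z‖) ^ N * ‖iteratedFDeriv ℝ m (reflectTranslate x ψ) z‖
      = (1 + ‖z‖) ^ N * ‖iteratedFDeriv ℝ m ψ (x - z)‖ :=
        congrArg _ (norm_iteratedFDeriv_comp_const_sub ψ x z m)
    _ ≤ (1 + R) ^ N * ((1 + ‖x - z‖) ^ N * ‖iteratedFDeriv ℝ m ψ (x - z)‖) := by
        rw [← mul_assoc]; gcongr
    _ ≤ (1 + R) ^ N * B := by
        have : 0 ≤ 1 + R := by linarith [norm_nonneg x]
        gcongr; exact hψ m hm _

end SchwartzMap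

end Schwartz

open SchwartzMap

section pN

variable {n N : ℕ}

lemma pN_le_of_forall_le {ψ : 𝓢(En n, ℝ)} {B : ℝ}
    (hψ : ∀ m ≤ N, ∀ z, (1 + ‖z‖) ^ N * ‖iteratedFDeriv ℝ m ψ z‖ ≤ B) :
    pN n N ψ ≤ ENNReal.ofReal ((N + 1) * B) := by
  calc pN n N ψ ≤ ∑ _m ∈ Finset.range (N + 1), ENNReal.ofReal B :=
        Finset.sum_le_sum fun m hm ↦ iSup_le fun z ↦ ENNReal.ofReal_le_ofReal <|
          hψ m (Nat.lt_succ_iff.mp (Finset.mem_range.mp hm)) z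
    _ = ENNReal.ofReal ((N + 1) * B) := by
        rw [Finset.sum_const, Finset.card_range, nsmul_eq_mul, ENNReal.ofReal_mul (by positivity)]
        norm_cast

lemma pN_smul (c : ℝ) (ψ : 𝓢(En n, ℝ)) :
    pN n N (c • ψ) = ENNReal.ofReal |c| * pN n N ψ := by
  simp only [pN, Finset.mul_sum, ENNReal.mul_iSup]
  refine Finset.sum_congr rfl fun m _ ↦ iSup_congr fun z ↦ ?_
  rw [show ⇑(c • ψ) = c • ⇑ψ from rfl, iteratedFDeriv_const_smul_apply (ψ.smooth m).contDiffAt,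
    norm_smul, Real.norm_eq_abs, ← ENNReal.ofReal_mul (abs_nonneg c), mul_left_comm]

end pN

section grandMax

variable {n N : ℕ} (f : TempDist n) (x : En n)

lemma ofReal_abs_le_grandMax {ψ : 𝓢(En n, ℝ)} (hψ : pN n N ψ ≤ 1) :
    ENNReal.ofReal |f (reflectTranslate x ψ)| ≤ grandMax n N f x :=
  le_iSup_of_le ψ <| le_iSup_of_le hψ <| le_iSup_of_le 1 <| le_iSup_of_le one_pos <|
    le_iSup_of_le (reflectTranslate x ψ) <| le_iSup_of_le (fun y ↦ by simp) le_rfl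

lemma ofReal_inv_mul_abs_le_grandMax {ψ : 𝓢(En n, ℝ)} {c : ℝ} (hc : 0 < c)
    (hψ : pN n N ψ ≤ ENNReal.ofReal c) :
    ENNReal.ofReal (c⁻¹ * |f (reflectTranslate x ψ)|) ≤ grandMax n N f x := by
  have hscaled : pN n N (c⁻¹ • ψ) ≤ 1 := by
    rw [pN_smul, abs_of_pos (inv_pos.2 hc), ENNReal.ofReal_inv_of_pos hc]
    exact (ENNReal.inv_mul_le_iff (by simpa using hc) ENNReal.ofReal_ne_top).2 (by simpa using hψ)
  simpa [abs_mul, abs_of_pos hc] using ofReal_abs_le_grandMax f x hscaled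

end grandMax

section cube

variable {n : ℕ}

lemma cube_eq_preimage (c : En n) (ℓ : ℝ) :
    cube n c ℓ = (MeasurableEquiv.toLp 2 (Fin n → ℝ)).symm ⁻¹'
      Set.univ.pi fun i ↦ Set.Icc (c i - ℓ / 2) (c i + ℓ / 2) := by
  ext y
  have hcoord : ∀ i, (MeasurableEquiv.toLp 2 (Fin n → ℝ)).symm y i = y i := fun _ ↦ rfl
  simp only [cube, Set.mem_ofPred_eq, Set.mem_preimage, Set.mem_univ_pi, Set.mem_Icc, abs_le,
    hcoord]
  exact forall_congr' fun i ↦ by constructor <;> rintro ⟨h₁, h₂⟩ <;> constructor <;> linarith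

lemma measurableSet_cube (c : En n) (ℓ : ℝ) : MeasurableSet (cube n c ℓ) := by
  rw [cube_eq_preimage]
  exact (MeasurableEquiv.toLp 2 (Fin n → ℝ)).symm.measurable
    (MeasurableSet.univ_pi fun _ ↦ measurableSet_Icc)

lemma volume_cube (c : En n) {ℓ : ℝ} (hℓ : 0 ≤ ℓ) :
    volume (cube n c ℓ) = ENNReal.ofReal (ℓ ^ n) := by
  rw [cube_eq_preimage,
    (EuclideanSpace.volume_preserving_symm_measurableEquiv_toLp (Fin n)).measure_preimage_equiv,
    volume_pi_pi]
  simp [Real.volume_Icc, ENNReal.ofReal_pow hℓ]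

lemma norm_sub_le_of_mem_cube {c x : En n} {ℓ : ℝ} (hℓ : 0 ≤ ℓ) (hx : x ∈ cube n c ℓ) :
    ‖x - c‖ ≤ √n * (ℓ / 2) := by
  have hsum : ∑ i, ‖(x - c) i‖ ^ 2 ≤ n * (ℓ / 2) ^ 2 := by
    calc ∑ i, ‖(x - c) i‖ ^ 2 ≤ ∑ _i : Fin n, (ℓ / 2) ^ 2 :=
          Finset.sum_le_sum fun i _ ↦ pow_le_pow_left₀ (norm_nonneg _) (hx i) 2
      _ = n * (ℓ / 2) ^ 2 := by simp
  rw [EuclideanSpace.norm_eq, ← Real.sqrt_sq (by positivity : 0 ≤ ℓ / 2),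
    ← Real.sqrt_mul n.cast_nonneg]
  exact Real.sqrt_le_sqrt hsum

end cube

lemma le_morrey_of_le_on_cube {n : ℕ} {p : ℝ} (hp : 0 < p) (φ : En n → ℝ → ℝ) {g : En n → ℝ≥0∞}
    {c : En n} {ℓ : ℝ} (hℓ : 0 < ℓ) {K : ℝ≥0∞} (hK : ∀ y ∈ cube n c ℓ, K ≤ g y) :
    (ENNReal.ofReal (φ c ℓ))⁻¹ * K ≤ morrey n p φ g := by
  refine le_iSup_of_le c <| le_iSup_of_le ℓ <| le_iSup_of_le hℓ <| mul_le_mul_right ?_ _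
  have hvol : volume (cube n c ℓ) ≠ 0 := by
    simpa [volume_cube c hℓ.le] using pow_pos hℓ n
  have hvol' : volume (cube n c ℓ) ≠ ⊤ := by simp [volume_cube c hℓ.le]
  have hmean : K ^ p ≤ (ENNReal.ofReal (ℓ ^ n))⁻¹ * ∫⁻ y in cube n c ℓ, g y ^ p := by
    rw [← volume_cube c hℓ.le, ← ENNReal.mul_le_iff_le_inv hvol hvol', mul_comm,
      ← setLIntegral_const]
    exact setLIntegral_mono' (measurableSet_cube c ℓ) fun y hy ↦
      ENNReal.rpow_le_rpow (hK y hy) hp.le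
  calc K = (K ^ p) ^ (1 / p) := by
        rw [← ENNReal.rpow_mul, mul_one_div_cancel hp.ne', ENNReal.rpow_one]
    _ ≤ _ := ENNReal.rpow_le_rpow hmean (by positivity)

theorem statement17_general (n : ℕ) (p : ℝ) (hp0 : 0 < p)
    (φ : En n → ℝ → ℝ) (hφ : GClass n p φ) :
    ∃ N₀ : ℕ, ∀ N ≥ N₀, ∀ κ : SchwartzMap (En n) ℝ,
      ∃ C : ℝ, 0 < C ∧
        ∀ f : TempDist n, hMorrey n p φ N f ≠ ⊤ →
          ENNReal.ofReal |f κ| ≤ ENNReal.ofReal C * hMorrey n p φ N f := by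
  obtain ⟨-, hφpos, -⟩ := hφ
  have hφ₀ : 0 < φ 0 1 := hφpos 0 1 one_pos
  refine ⟨0, fun N _ κ ↦ ?_⟩
  obtain ⟨B, hB, hκ⟩ := κ.exists_pos_weighted_iteratedFDeriv_le N
  set A : ℝ := (N + 1) * ((1 + √n * (1 / 2)) ^ N * B)
  have hA : 0 < A := by positivity
  refine ⟨A * φ 0 1, by positivity, fun f _ ↦ ?_⟩
  have hlower : ∀ x ∈ cube n 0 1, ENNReal.ofReal (A⁻¹ * |f κ|) ≤ grandMax n N f x := by
    intro x hx
    have hxnorm : ‖x‖ ≤ √n * (1 / 2) := by simpa using norm_sub_le_of_mem_cube zero_le_one hx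
    simpa using ofReal_inv_mul_abs_le_grandMax f x hA <|
      pN_le_of_forall_le fun m hm z ↦ weighted_iteratedFDeriv_reflectTranslate_le hκ hxnorm hm z
  calc ENNReal.ofReal |f κ|
      = ENNReal.ofReal (A * φ 0 1) *
          ((ENNReal.ofReal (φ 0 1))⁻¹ * ENNReal.ofReal (A⁻¹ * |f κ|)) := by
        rw [ENNReal.ofReal_mul hA.le, mul_assoc, ← mul_assoc (ENNReal.ofReal (φ 0 1)),
          ENNReal.mul_inv_cancel (ENNReal.ofReal_pos.2 hφ₀).ne' ENNReal.ofReal_ne_top, one_mul,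
          ← ENNReal.ofReal_mul hA.le, mul_inv_cancel_left₀ hA.ne']
    _ ≤ ENNReal.ofReal (A * φ 0 1) * hMorrey n p φ N f :=
        mul_le_mul_right (le_morrey_of_le_on_cube hp0 φ one_pos hlower) _

theorem statement17 (n : ℕ) (hn : 0 < n) (p : ℝ) (hp0 : 0 < p) (hp1 : p ≤ 1)
    (φ : En n → ℝ → ℝ) (hφ : GClass n p φ) :
    ∃ N₀ : ℕ, ∀ N ≥ N₀, ∀ κ : SchwartzMap (En n) ℝ,
      ∃ C : ℝ, 0 < C ∧
        ∀ f : TempDist n, hMorrey n p φ N f ≠ ⊤ →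
          ENNReal.ofReal |f κ| ≤ ENNReal.ofReal C * hMorrey n p φ N f :=
  statement17_general n p hp0 φ hφ

end
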